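/- The derivation ∇₁ = x D_x + 2v D_v on functions of (x,y,u,v) commutes with the infinitesimal symmetry Y(f) = 4f ∂_u − (4vf' + 8x²f'')∂_v in the sense that [x∂_x + 2v∂_v, 4f∂_u − (4vf' + 8x²f'')∂_v] = 0 for every smooth f = f(u). -/

import Mathlib

open scoped ContDiff


noncomputable section

/-- Lie bracket of vector fields on `ℝ⁴` (written in components). -/
def lieB (V W : (Fin 4 → ℝ) → (Fin 4 → ℝ)) : (Fin 4 → ℝ) → (Fin 4 → ℝ) :=
  fun p i => fderiv ℝ (fun q => W q i) p (V p) - fderiv ℝ (fun q => V q i) p (W p)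

/-- The invariant derivation `∇₁ = x ∂_x + 2v ∂_v` on `ℝ⁴` with coordinates `(x,y,u,v)`. -/
def nabla1 : (Fin 4 → ℝ) → (Fin 4 → ℝ) := fun p => ![p 0, 0, 0, 2 * p 3]

/-- The infinitesimal symmetry `Y(f) = 4f ∂_u − (4vf' + 8x²f'') ∂_v` on `ℝ⁴`. -/
def Y4 (f : ℝ → ℝ) : (Fin 4 → ℝ) → (Fin 4 → ℝ) := fun p =>
  ![0, 0, 4 * f (p 2),
    -(4 * p 3 * deriv f (p 2) + 8 * (p 0) ^ 2 * deriv (deriv f) (p 2))]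

/-- `[x∂_x + 2v∂_v, 4f∂_u − (4vf' + 8x²f'')∂_v] = 0` for every smooth `f = f(u)`. -/
theorem nabla1_commutes_with_symmetry (f : ℝ → ℝ) (hf : ContDiff ℝ (⊤ : ℕ∞) f) :
    lieB nabla1 (Y4 f) = fun _ => 0 := by
  have hf0 : ContDiff ℝ ∞ f := hf.of_le (by simp)
  have hf1 : ContDiff ℝ ∞ (deriv f) := (contDiff_infty_iff_deriv.mp hf0).2
  have hf2 : ContDiff ℝ ∞ (deriv (deriv f)) := (contDiff_infty_iff_deriv.mp hf1).2
  have hd1 : Differentiable ℝ (deriv f) := hf1.differentiable (by simp)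
  have hd2 : Differentiable ℝ (deriv (deriv f)) := hf2.differentiable (by simp)
  funext p i
  have hq0 : HasFDerivAt (fun q : Fin 4 → ℝ => q 0)
      (ContinuousLinearMap.proj (R := ℝ) (φ := fun _ : Fin 4 => ℝ) 0) p :=
    (ContinuousLinearMap.proj (R := ℝ) (φ := fun _ : Fin 4 => ℝ) 0).hasFDerivAt
  have hq2 : HasFDerivAt (fun q : Fin 4 → ℝ => q 2)
      (ContinuousLinearMap.proj (R := ℝ) (φ := fun _ : Fin 4 => ℝ) 2) p :=
    (ContinuousLinearMap.proj (R := ℝ) (φ := fun _ : Fin 4 => ℝ) 2).hasFDerivAt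
  have hq3 : HasFDerivAt (fun q : Fin 4 → ℝ => q 3)
      (ContinuousLinearMap.proj (R := ℝ) (φ := fun _ : Fin 4 => ℝ) 3) p :=
    (ContinuousLinearMap.proj (R := ℝ) (φ := fun _ : Fin 4 => ℝ) 3).hasFDerivAt
  have hF : HasFDerivAt (fun q : Fin 4 → ℝ => f (q 2))
      (deriv f (p 2) • (ContinuousLinearMap.proj 2 : (Fin 4 → ℝ) →L[ℝ] ℝ)) p :=
    by have := HasDerivAt.comp_hasFDerivAt p ((hf0.differentiable (by simp)) (p 2)).hasDerivAt hq2; exact this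
  have hF1 : HasFDerivAt (fun q : Fin 4 → ℝ => deriv f (q 2))
      (deriv (deriv f) (p 2) • (ContinuousLinearMap.proj 2 : (Fin 4 → ℝ) →L[ℝ] ℝ)) p :=
    by have := HasDerivAt.comp_hasFDerivAt p (hd1 (p 2)).hasDerivAt hq2; exact this
  have hF2 : HasFDerivAt (fun q : Fin 4 → ℝ => deriv (deriv f) (q 2))
      (deriv (deriv (deriv f)) (p 2) • (ContinuousLinearMap.proj 2 : (Fin 4 → ℝ) →L[ℝ] ℝ)) p :=
    by have := HasDerivAt.comp_hasFDerivAt p (hd2 (p 2)).hasDerivAt hq2; exact this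
  have hA1 := HasFDerivAt.const_mul (𝕜 := ℝ) hq3 (4:ℝ)
  have hA2 := hA1.mul hF1
  have hB0 := hq0.mul hq0
  have hB1 := HasFDerivAt.const_mul (𝕜 := ℝ) hB0 (8:ℝ)
  have hB2 := hB1.mul hF2
  have hG0 := (hA2.add hB2).neg
  fin_cases i
  · show fderiv ℝ (fun _ : Fin 4 → ℝ => (0:ℝ)) p (nabla1 p)
        - fderiv ℝ (fun q : Fin 4 → ℝ => q 0) p (Y4 f p) = 0
    rw [hq0.fderiv, fderiv_const_apply]
    simp [Y4]
  · show fderiv ℝ (fun _ : Fin 4 → ℝ => (0:ℝ)) p (nabla1 p)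
        - fderiv ℝ (fun _ : Fin 4 → ℝ => (0:ℝ)) p (Y4 f p) = 0
    simp
  · show fderiv ℝ (fun q : Fin 4 → ℝ => 4 * f (q 2)) p (nabla1 p)
        - fderiv ℝ (fun _ : Fin 4 → ℝ => (0:ℝ)) p (Y4 f p) = 0
    rw [(HasFDerivAt.const_mul (𝕜 := ℝ) hF (4:ℝ)).fderiv, fderiv_const_apply]
    simp [nabla1]
  · show fderiv ℝ (fun q : Fin 4 → ℝ =>
        -(4 * q 3 * deriv f (q 2) + 8 * (q 0) ^ 2 * deriv (deriv f) (q 2))) p (nabla1 p)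
        - fderiv ℝ (fun q : Fin 4 → ℝ => 2 * q 3) p (Y4 f p) = 0
    rw [show (fun q : Fin 4 → ℝ =>
        -(4 * q 3 * deriv f (q 2) + 8 * (q 0) ^ 2 * deriv (deriv f) (q 2)))
      = (fun q : Fin 4 → ℝ =>
        -(4 * q 3 * deriv f (q 2) + 8 * (q 0 * q 0) * deriv (deriv f) (q 2)))
      from funext fun q => by ring]
    rw [(show HasFDerivAt (fun q : Fin 4 → ℝ => -(4 * q 3 * deriv f (q 2) + 8 * (q 0 * q 0) * deriv (deriv f) (q 2))) _ p from hG0).fderiv, (HasFDerivAt.const_mul (𝕜 := ℝ) hq3 (2:ℝ)).fderiv]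
    simp [nabla1, Y4]
    ring

end
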